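/- A sequence (s_n) in the Hahn field 𝓕 converging in the weak topology τ_w has the property that for every q ∈ ℚ the real sequence (s_n[q]) converges in ℝ. Conversely, if (s_n) is regular (the union of the supports of the s_n is well-ordered) and (s_n[q]) converges in ℝ for every q ∈ ℚ, then (s_n) converges in (𝓕, τ_w). -/

import Mathlib

open scoped Classical

/-- The Hahn field `𝓕` of maps `ℚ → ℝ` with well-ordered support. -/
noncomputable abbrev F := HahnSeries ℚ ℝ

/-- A subset `A` of `ℚ` is well-bounded if every nonempty subset of `A`
has a maximum element. -/
def WellBoundedSet (A : Set ℚ) : Prop :=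
  ∀ S ⊆ A, S.Nonempty → ∃ m ∈ S, ∀ a ∈ S, a ≤ m

/-- A well-bounded partition of `ℚ`: a countable family of mutually disjoint
well-bounded sets whose union is all of `ℚ`. -/
def IsWBPartition (γ : ℕ → Set ℚ) : Prop :=
  Pairwise (Function.onFun Disjoint γ) ∧ (∀ i, WellBoundedSet (γ i)) ∧
    (⋃ i, γ i) = Set.univ

/-- A finite well-bounded partition of `ℚ`: each piece is moreover finite. -/
def IsFinWBPartition (γ : ℕ → Set ℚ) : Prop :=
  IsWBPartition γ ∧ ∀ i, (γ i).Finite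

/-- `Γ_n`, the union of the first `n` pieces of the partition. -/
def Gam (γ : ℕ → Set ℚ) (n : ℕ) : Set ℚ := ⋃ i < n, γ i

/-- The semi-norm `‖x‖_{Γ,n} = max {|x[q]| : q ∈ Γ_n}` induced by a well-bounded
partition `Γ` of `ℚ` (realized as a supremum together with `0`). -/
noncomputable def gnorm (γ : ℕ → Set ℚ) (n : ℕ) (x : F) : ℝ :=
  sSup (insert 0 ((fun q => |x.coeff q|) '' Gam γ n))

/-- `μ(r) = ⌈1/r⌉`. -/
noncomputable def mu (r : ℝ) : ℕ := ⌈1 / r⌉₊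

/-- The pseudo-ball `B_Γ(x, r) = {y | ‖x − y‖_{Γ,μ(r)} < r}`. -/
def PB (γ : ℕ → Set ℚ) (x : F) (r : ℝ) : Set F :=
  {y : F | gnorm γ (mu r) (x - y) < r}

/-- The topology `τ_Γ` induced by the semi-norms of the partition `Γ`, as the
collection of its open sets. -/
def Top' (γ : ℕ → Set ℚ) : Set (Set F) :=
  {O : Set F | ∀ x ∈ O, ∃ r : ℝ, 0 < r ∧ PB γ x r ⊆ O}

/-- A subset `A` of `ℚ` is well-ordered if every nonempty subset of `A`
has a minimum element. -/
def WellOrderedSet (A : Set ℚ) : Prop :=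
  ∀ S ⊆ A, S.Nonempty → ∃ m ∈ S, ∀ a ∈ S, m ≤ a

/-- Convergence of a sequence in `𝓕` with respect to the topology induced by the
family of semi-norms of the partition `γ`: for every real `ε > 0` eventually
`‖s_n − l‖_{Γ,μ(ε)} < ε`. -/
def WeakConvTo (γ : ℕ → Set ℚ) (s : ℕ → F) (l : F) : Prop :=
  ∀ ε : ℝ, 0 < ε → ∃ N : ℕ, ∀ n ≥ N, gnorm γ (mu ε) (s n - l) < ε

/-!
Each `Γ_n` is finite, so `‖·‖_{Γ,n}` is a maximum of finitely many coordinates, and every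
`q ∈ ℚ` lies in `Γ_{μ(ε)}` once `ε` is small. Hence `τ_w`-convergence is exactly
coordinatewise convergence to the coefficients of the limit. For the converse, the
pointwise limit vanishes off `⋃ n, supp s_n`, so regularity makes it a Hahn series.
-/

open Filter Topology

lemma Gam_finite {γ : ℕ → Set ℚ} (hγ : ∀ i, (γ i).Finite) (n : ℕ) : (Gam γ n).Finite :=
  (Set.finite_lt_nat n).biUnion fun i _ => hγ i

section gnorm

variable {γ : ℕ → Set ℚ} {n : ℕ}

lemma abs_coeff_le_gnorm (hfin : (Gam γ n).Finite) {q : ℚ} (hq : q ∈ Gam γ n) (x : F) :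
    |x.coeff q| ≤ gnorm γ n x :=
  le_csSup ((hfin.image _).insert 0).bddAbove (Set.mem_insert_of_mem _ ⟨q, hq, rfl⟩)

lemma gnorm_lt_of_forall_abs_coeff_lt (hfin : (Gam γ n).Finite) {ε : ℝ} (hε : 0 < ε) (x : F)
    (h : ∀ q ∈ Gam γ n, |x.coeff q| < ε) : gnorm γ n x < ε := by
  obtain h0 | ⟨q, hq, hval⟩ : gnorm γ n x ∈ insert 0 ((fun q => |x.coeff q|) '' Gam γ n) :=
    Set.Nonempty.csSup_mem ⟨0, Set.mem_insert _ _⟩ ((hfin.image _).insert 0)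
  · exact h0 ▸ hε
  · exact hval ▸ h q hq

end gnorm

lemma lt_mu_of_le_one_div {r : ℝ} (hr : 0 < r) {i : ℕ} (h : r ≤ 1 / (i + 1)) : i < mu r := by
  have hi : (i + 1 : ℝ) ≤ 1 / r := (le_one_div hr (by positivity)).mp h
  exact Nat.lt_ceil.mpr (by linarith)

lemma WeakConvTo.tendsto_coeff {γ : ℕ → Set ℚ} (hcover : (⋃ i, γ i) = Set.univ)
    (hfin : ∀ n, (Gam γ n).Finite) {s : ℕ → F} {l : F} (h : WeakConvTo γ s l) (q : ℚ) :
    Tendsto (fun n => (s n).coeff q) atTop (𝓝 (l.coeff q)) := by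
  obtain ⟨i, hqi⟩ := Set.mem_iUnion.mp (hcover ▸ Set.mem_univ q)
  refine Metric.tendsto_atTop.mpr fun ε hε => ?_
  -- Shrinking `ε` to at most `1 / (i + 1)` makes the semi-norm see the piece `γ i`.
  set ε' := min ε (1 / (i + 1 : ℝ))
  have hε' : 0 < ε' := lt_min hε (by positivity)
  have hq : q ∈ Gam γ (mu ε') :=
    Set.mem_biUnion (lt_mu_of_le_one_div hε' (min_le_right _ _)) hqi
  obtain ⟨N, hN⟩ := h ε' hε'
  refine ⟨N, fun n hn => ?_⟩
  calc dist ((s n).coeff q) (l.coeff q) = |(s n - l).coeff q| := by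
        rw [HahnSeries.coeff_sub, Real.dist_eq]
    _ ≤ gnorm γ (mu ε') (s n - l) := abs_coeff_le_gnorm (hfin _) hq _
    _ < ε' := hN n hn
    _ ≤ ε := min_le_left _ _

lemma weakConvTo_of_tendsto_coeff {γ : ℕ → Set ℚ} (hfin : ∀ n, (Gam γ n).Finite) {s : ℕ → F}
    {l : F} (h : ∀ q, Tendsto (fun n => (s n).coeff q) atTop (𝓝 (l.coeff q))) :
    WeakConvTo γ s l := by
  intro ε hε
  have hev : ∀ᶠ n in atTop, ∀ q ∈ Gam γ (mu ε), |(s n - l).coeff q| < ε := by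
    rw [eventually_all_finite (hfin _)]
    intro q _
    simpa only [HahnSeries.coeff_sub, Real.dist_eq] using
      (Metric.tendsto_nhds.mp (h q)) ε hε
  obtain ⟨N, hN⟩ := eventually_atTop.mp hev
  exact ⟨N, fun n hn => gnorm_lt_of_forall_abs_coeff_lt (hfin _) hε _ (hN n hn)⟩

lemma WellOrderedSet.isPWO {A : Set ℚ} (h : WellOrderedSet A) : A.IsPWO := by
  rw [Set.isPWO_iff_isWF, Set.IsWF, Set.WellFoundedOn, WellFounded.wellFounded_iff_has_min]
  rintro t ⟨x, hx⟩
  obtain ⟨_, ⟨m, hm, rfl⟩, hmin⟩ :=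
    h (Subtype.val '' t) (by rintro _ ⟨b, _, rfl⟩; exact b.2) ⟨x, x, hx, rfl⟩
  exact ⟨m, hm, fun y hy => not_lt.mpr (hmin y ⟨y, hy, rfl⟩)⟩

lemma support_subset_iUnion_support_of_tendsto {α M : Type*} [Zero M] [TopologicalSpace M]
    [T2Space M] {f : ℕ → α → M} {L : α → M} (h : ∀ a, Tendsto (fun n => f n a) atTop (𝓝 (L a))) :
    Function.support L ⊆ ⋃ n, Function.support (f n) := by
  intro a ha
  by_contra hnot
  simp only [Set.mem_iUnion, Function.mem_support, not_exists, not_not] at hnot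
  exact ha (tendsto_nhds_unique (h a) (by simp only [hnot, tendsto_const_nhds]))

/-- A sequence `(s_n)` converging in the weak topology `τ_w` converges pointwise:
each real sequence `(s_n[q])` converges in `ℝ`. Conversely, a regular sequence
(union of supports well-ordered) converging pointwise converges in `(𝓕, τ_w)`. -/
theorem weak_convergence_criterion (γ : ℕ → Set ℚ) (hγ : IsFinWBPartition γ)
    (s : ℕ → F) :
    ((∃ l : F, WeakConvTo γ s l) →
      ∀ q : ℚ, ∃ L : ℝ,
        Filter.Tendsto (fun n => (s n).coeff q) Filter.atTop (nhds L)) ∧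
    ((WellOrderedSet (⋃ n, (s n).support) ∧
        ∀ q : ℚ, ∃ L : ℝ,
          Filter.Tendsto (fun n => (s n).coeff q) Filter.atTop (nhds L)) →
      ∃ l : F, WeakConvTo γ s l) := by
  have hfin : ∀ n, (Gam γ n).Finite := Gam_finite hγ.2
  refine ⟨fun ⟨l, hl⟩ q => ⟨l.coeff q, hl.tendsto_coeff hγ.1.2.2 hfin q⟩, ?_⟩
  rintro ⟨hwo, hpointwise⟩
  choose L hL using hpointwise
  let l : F := ⟨L, hwo.isPWO.mono (support_subset_iUnion_support_of_tendsto hL)⟩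
  exact ⟨l, weakConvTo_of_tendsto_coeff hfin hL⟩
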